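/- Let S and A be finite nonempty sets, let ρ : S × A → ℝ be nonnegative, fix (s₀, a₀) ∈ S × A, and suppose b := ∑_{a'} ρ(s₀,a') > 0. Then the function g : ℝ → ℝ defined by g(t) = W̄(ρ with the entry at (s₀,a₀) replaced by t) is differentiable at t = ρ(s₀,a₀) with derivative g'(ρ(s₀,a₀)) = 1/2 − ρ(s₀,a₀)/b + (1/2)·∑_{a'} (ρ(s₀,a')/b)². (This is the partial-derivative computation ∂W̄/∂ρ(s,a) used in the proof of Theorem 4.) -/

import Mathlib

open Finset

/-- Causal Tsallis entropy of a state-action visitation measure `ρ : S × A → ℝ`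
(the ratio is `0` when the denominator is `0`, by Lean's division convention). -/
noncomputable def Wbar {S A : Type*} [Fintype S] [Fintype A] (ρ : S × A → ℝ) : ℝ :=
  (1 / 2) * ∑ s, ∑ a, ρ (s, a) * (1 - ρ (s, a) / ∑ a', ρ (s, a'))

/-!
`W̄` is half a sum over states of row terms `∑ₐ wₐ (1 - wₐ / ∑ w) = ∑ w - ∑ w² / ∑ w`, and
changing `ρ(s₀, a₀)` only changes the row of `s₀`. In that row `∑ w` is affine and `∑ w²`
quadratic in the changed entry, so the derivative follows from the quotient rule.
-/

theorem Fintype.sum_update_eq_sum_sub_add {ι M : Type*} [Fintype ι] [DecidableEq ι]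
    [AddCommGroup M] (f : ι → M) (i : ι) (b : M) :
    ∑ j, Function.update f i b j = ∑ j, f j - f i + b := by
  rw [sum_update_of_mem (mem_univ i), ← sum_erase_eq_sub (mem_univ i), sdiff_singleton_eq_erase,
    add_comm]

namespace Wbar

variable {S A : Type*} [Fintype S] [Fintype A]

noncomputable def row (w : A → ℝ) : ℝ :=
  ∑ a, w a * (1 - w a / ∑ a', w a')

theorem eq_sum_row (ρ : S × A → ℝ) : Wbar ρ = 1 / 2 * ∑ s, row (Function.curry ρ s) := rfl

theorem row_eq_sum_sub_sum_sq_div (w : A → ℝ) :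
    row w = ∑ a, w a - (∑ a, w a ^ 2) / ∑ a, w a := by
  simp only [row, mul_one_sub, sum_sub_distrib, sum_div, pow_two, mul_div_assoc]

theorem update_eq [DecidableEq S] [DecidableEq A] (ρ : S × A → ℝ) (s₀ : S) (a₀ : A) (t : ℝ) :
    Wbar (Function.update ρ (s₀, a₀) t) =
      Wbar ρ + 1 / 2 * (row (Function.update (Function.curry ρ s₀) a₀ t) -
        row (Function.curry ρ s₀)) := by
  rw [eq_sum_row, eq_sum_row, Function.curry_update, ← Function.comp_def row,
    Function.comp_update, Fintype.sum_update_eq_sum_sub_add]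
  simp only [Function.comp_apply]
  ring

theorem hasDerivAt_row_update [DecidableEq A] (w : A → ℝ) (a₀ : A) (hw : ∑ a, w a ≠ 0) :
    HasDerivAt (fun t => row (Function.update w a₀ t))
      (1 - 2 * w a₀ / ∑ a, w a + ∑ a, (w a / ∑ a', w a') ^ 2) (w a₀) := by
  set b := ∑ a, w a
  set q := ∑ a, w a ^ 2
  have hrow : ∀ t, row (Function.update w a₀ t) =
      (b - w a₀ + t) - (q - w a₀ ^ 2 + t ^ 2) / (b - w a₀ + t) := by
    intro t
    rw [row_eq_sum_sub_sum_sq_div, Fintype.sum_update_eq_sum_sub_add]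
    simp only [← Function.comp_apply (f := fun x : ℝ => x ^ 2), Function.comp_update,
      Fintype.sum_update_eq_sum_sub_add]
    rfl
  have hsum : HasDerivAt (fun t => b - w a₀ + t) 1 (w a₀) := (hasDerivAt_id _).const_add _
  have hsq : HasDerivAt (fun t => q - w a₀ ^ 2 + t ^ 2) (2 * w a₀) (w a₀) := by
    simpa using (hasDerivAt_pow 2 (w a₀)).const_add (q - w a₀ ^ 2)
  have hden : b - w a₀ + w a₀ = b := sub_add_cancel b (w a₀)
  simp only [hrow]
  refine (hsum.sub (hsq.div hsum (by rwa [hden]))).congr_deriv ?_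
  simp only [hden, div_pow, ← sum_div]
  field_simp
  ring

end Wbar

theorem stmt3_general {S A : Type*} [Fintype S] [Fintype A]
    [DecidableEq S] [DecidableEq A]
    (ρ : S × A → ℝ) (s₀ : S) (a₀ : A)
    (hb : 0 < ∑ a', ρ (s₀, a')) :
    HasDerivAt (fun t => Wbar (Function.update ρ (s₀, a₀) t))
      (1 / 2 - ρ (s₀, a₀) / (∑ a', ρ (s₀, a'))
        + (1 / 2) * ∑ a', (ρ (s₀, a') / ∑ a'', ρ (s₀, a'')) ^ 2)
      (ρ (s₀, a₀)) := by
  have hrow := Wbar.hasDerivAt_row_update (Function.curry ρ s₀) a₀ hb.ne'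
  simp only [Wbar.update_eq]
  refine (((hrow.sub_const _).const_mul (1 / 2)).const_add (Wbar ρ)).congr_deriv ?_
  simp only [Function.curry_apply]
  ring

/-- The partial derivative `∂W̄/∂ρ(s₀,a₀)` used in the proof of Theorem 4. -/
theorem stmt3 {S A : Type*} [Fintype S] [Fintype A] [Nonempty S] [Nonempty A]
    [DecidableEq S] [DecidableEq A]
    (ρ : S × A → ℝ) (hρ : ∀ p, 0 ≤ ρ p) (s₀ : S) (a₀ : A)
    (hb : 0 < ∑ a', ρ (s₀, a')) :
    HasDerivAt (fun t => Wbar (Function.update ρ (s₀, a₀) t))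
      (1 / 2 - ρ (s₀, a₀) / (∑ a', ρ (s₀, a'))
        + (1 / 2) * ∑ a', (ρ (s₀, a') / ∑ a'', ρ (s₀, a'')) ^ 2)
      (ρ (s₀, a₀)) :=
  stmt3_general ρ s₀ a₀ hb
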